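/- In ℂ³, let ω = e^{2πi/3}, let X be the cyclic shift matrix sending the standard basis vector e_r to e_{r+1 mod 3}, let Z = diag(1, ω, ω²), and for t ∈ ℝ let ψ(t) = (0, 1, −e^{it})/√2. Then for all t ∈ ℝ, the nine unit vectors X^j Z^k ψ(t) for j, k ∈ {0, 1, 2} satisfy |⟨X^j Z^k ψ(t), X^{j'} Z^{k'} ψ(t)⟩|² = 1/4 whenever (j, k) ≠ (j', k'); consequently the nine rank-one projectors Π_{jk}(t) = X^j Z^k |ψ(t)⟩⟨ψ(t)| (X^j Z^k)† form a SIC in dimension 3, i.e., tr(Π_{jk}(t) Π_{j'k'}(t)) = (3·δ_{(jk),(j'k')} + 1)/4. -/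

import Mathlib

/-!
Coordinatewise, `(X^j Z^k ψ)_i = ω^{k(i-j)} ψ_{i-j}`. Because `ψ_0 = 0` and `|ψ_1| = |ψ_2|`,
the overlap of two orbit vectors with different shifts `j ≠ j'` has a single nonzero term, of
modulus `|ψ_1| |ψ_2|`, while for equal shifts and `k ≠ k'` it equals `|ψ_1|² (z + z²) = -|ψ_1|²`
for a cube root of unity `z ≠ 1`. The trace identity is `tr(|v⟩⟨v|w⟩⟨w|) = |⟨v, w⟩|²`.
-/
open Matrix

/-- The cyclic shift matrix on `ℂ³`, sending `e_r` to `e_{r+1 mod 3}`. -/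
noncomputable def Xshift : Matrix (Fin 3) (Fin 3) ℂ :=
  fun r c => if r = c + 1 then 1 else 0

/-- The phase matrix `Z = diag(1, ω, ω²)` with `ω = e^{2πi/3}`. -/
noncomputable def Zphase : Matrix (Fin 3) (Fin 3) ℂ :=
  Matrix.diagonal fun r => Complex.exp (2 * (Real.pi : ℂ) * Complex.I / 3) ^ (r : ℕ)

/-- The fiducial vector `ψ(t) = (0, 1, −e^{it})/√2`. -/
noncomputable def fiducial (t : ℝ) : Fin 3 → ℂ :=
  fun i => ![0, 1, -Complex.exp ((t : ℂ) * Complex.I)] i / (Real.sqrt 2 : ℂ)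

/-- The Heisenberg–Weyl orbit vector `X^j Z^k ψ(t)`. -/
noncomputable def sicVec (t : ℝ) (j k : Fin 3) : Fin 3 → ℂ :=
  (Xshift ^ (j : ℕ) * Zphase ^ (k : ℕ)).mulVec (fiducial t)

/-- The rank-one projector `Π_{jk}(t) = X^j Z^k |ψ(t)⟩⟨ψ(t)| (X^j Z^k)†`. -/
noncomputable def sicProj (t : ℝ) (j k : Fin 3) : Matrix (Fin 3) (Fin 3) ℂ :=
  Matrix.vecMulVec (sicVec t j k) (star (sicVec t j k))

local notation "ω" => Complex.exp (2 * (Real.pi : ℂ) * Complex.I / 3)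

open ComplexConjugate

lemma isPrimitiveRoot_omega : IsPrimitiveRoot ω 3 := by
  exact_mod_cast Complex.isPrimitiveRoot_exp 3 (by norm_num)

lemma norm_omega : ‖ω‖ = 1 :=
  Complex.norm_eq_one_of_pow_eq_one isPrimitiveRoot_omega.pow_eq_one (by norm_num)

lemma add_sq_eq_neg_one_of_pow_three_eq_one {R : Type*} [CommRing R] [IsDomain R] {z : R}
    (h3 : z ^ 3 = 1) (h1 : z ≠ 1) : z + z ^ 2 = -1 := by
  have : (z - 1) * (z + z ^ 2 + 1) = 0 := by linear_combination h3
  rcases mul_eq_zero.1 this with h | h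
  · exact absurd (sub_eq_zero.1 h) h1
  · linear_combination h

lemma Xshift_mulVec (v : Fin 3 → ℂ) : Xshift *ᵥ v = fun i => v (i - 1) := by
  ext i
  simp_rw [mulVec, dotProduct, Xshift, ite_mul, one_mul, zero_mul, eq_comm (a := i),
    ← eq_sub_iff_add_eq, Finset.sum_ite_eq', Finset.mem_univ, if_true]

lemma Xshift_pow_mulVec (j : Fin 3) (v : Fin 3 → ℂ) :
    Xshift ^ (j : ℕ) *ᵥ v = fun i => v (i - j) := by
  fin_cases j <;> ext i <;> simp [pow_two, ← mulVec_mulVec, Xshift_mulVec, sub_sub]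

lemma Zphase_pow_mulVec (n : ℕ) (v : Fin 3 → ℂ) :
    Zphase ^ n *ᵥ v = fun i : Fin 3 => (ω ^ (i : ℕ)) ^ n * v i := by
  ext i
  simp [Zphase, diagonal_pow, mulVec_diagonal]

noncomputable def weylVec (ψ : Fin 3 → ℂ) (j k : Fin 3) : Fin 3 → ℂ :=
  (Xshift ^ (j : ℕ) * Zphase ^ (k : ℕ)) *ᵥ ψ

lemma weylVec_apply (ψ : Fin 3 → ℂ) (j k i : Fin 3) :
    weylVec ψ j k i = (ω ^ ((i - j : Fin 3) : ℕ)) ^ (k : ℕ) * ψ (i - j) := by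
  rw [weylVec, ← mulVec_mulVec, Zphase_pow_mulVec, Xshift_pow_mulVec]

lemma norm_omega_pow_pow (m n : ℕ) : ‖(ω ^ m) ^ n‖ = 1 := by
  simp [norm_omega]

lemma sum_norm_sq_weylVec (ψ : Fin 3 → ℂ) (j k : Fin 3) :
    ∑ i, ‖weylVec ψ j k i‖ ^ 2 = ∑ i, ‖ψ i‖ ^ 2 := by
  simp_rw [weylVec_apply, norm_mul, norm_omega_pow_pow, one_mul]
  exact (Equiv.subRight j).sum_comp fun r => ‖ψ r‖ ^ 2

lemma norm_sum_conj_mul_shift_of_ne {ψ : Fin 3 → ℂ} (hψ : ψ 0 = 0) {p q : Fin 3 → ℂ}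
    (hp : ∀ i, ‖p i‖ = 1) (hq : ∀ i, ‖q i‖ = 1) {j j' : Fin 3} (h : j ≠ j') :
    ‖∑ i, conj (p i * ψ (i - j)) * (q i * ψ (i - j'))‖ = ‖ψ 1‖ * ‖ψ 2‖ := by
  have h1 : (-1 : Fin 3) = 2 := rfl
  have h2 : (-2 : Fin 3) = 1 := rfl
  fin_cases j <;> fin_cases j' <;> simp [Fin.sum_univ_three, hψ, hp, hq, h1, h2, mul_comm] at h ⊢

lemma sum_conj_mul_pow_of_ne {ψ : Fin 3 → ℂ} (hψ : ψ 0 = 0) (h12 : ‖ψ 1‖ = ‖ψ 2‖)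
    {u u' : ℂ} (hu : u ^ 3 = 1) (hu' : u' ^ 3 = 1) (hne : u ≠ u') :
    ∑ r : Fin 3, conj (u ^ (r : ℕ) * ψ r) * (u' ^ (r : ℕ) * ψ r) = -‖ψ 1‖ ^ 2 := by
  have hz3 : (conj u * u') ^ 3 = 1 := by rw [mul_pow, ← map_pow, hu, hu', map_one, one_mul]
  have hz1 : conj u * u' ≠ 1 := by
    have hu1 := Complex.norm_eq_one_of_pow_eq_one hu three_ne_zero
    rwa [← Complex.inv_eq_conj hu1, Ne, inv_mul_eq_one₀ (norm_ne_zero_iff.1 (by simp [hu1]))]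
  have hterm : ∀ (a : ℂ) (n : ℕ),
      conj (u ^ n * a) * (u' ^ n * a) = (conj u * u') ^ n * (conj a * a) := by
    intro a n
    simp only [map_mul, map_pow]
    ring
  simp only [Fin.sum_univ_three, hterm, Complex.conj_mul', hψ, norm_zero, Complex.ofReal_zero,
    ← h12, Fin.val_zero, Fin.val_one, Fin.val_two]
  linear_combination (‖ψ 1‖ : ℂ) ^ 2 * add_sq_eq_neg_one_of_pow_three_eq_one hz3 hz1

lemma inner_weylVec_same_shift {ψ : Fin 3 → ℂ} (hψ : ψ 0 = 0) (h12 : ‖ψ 1‖ = ‖ψ 2‖)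
    (j : Fin 3) {k k' : Fin 3} (hk : k ≠ k') :
    ∑ i, conj (weylVec ψ j k i) * weylVec ψ j k' i = -‖ψ 1‖ ^ 2 := by
  have hpow : ∀ k : Fin 3, (ω ^ (k : ℕ)) ^ 3 = 1 := fun k => by
    rw [pow_right_comm, isPrimitiveRoot_omega.pow_eq_one, one_pow]
  have hne : ω ^ (k : ℕ) ≠ ω ^ (k' : ℕ) := fun h =>
    hk (Fin.ext (isPrimitiveRoot_omega.pow_inj k.isLt k'.isLt h))
  simp_rw [weylVec_apply, pow_right_comm ω _ (k : ℕ), pow_right_comm ω _ (k' : ℕ)]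
  exact ((Equiv.subRight j).sum_comp
    fun r => conj ((ω ^ (k : ℕ)) ^ (r : ℕ) * ψ r) * ((ω ^ (k' : ℕ)) ^ (r : ℕ) * ψ r)).trans
    (sum_conj_mul_pow_of_ne hψ h12 (hpow k) (hpow k') hne)

lemma norm_inner_weylVec_of_ne {ψ : Fin 3 → ℂ} (hψ : ψ 0 = 0) (h12 : ‖ψ 1‖ = ‖ψ 2‖)
    {j k j' k' : Fin 3} (h : (j, k) ≠ (j', k')) :
    ‖∑ i, conj (weylVec ψ j k i) * weylVec ψ j' k' i‖ = ‖ψ 1‖ ^ 2 := by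
  by_cases hj : j = j'
  · subst hj
    rw [inner_weylVec_same_shift hψ h12 j fun hk => h (by rw [hk])]
    simp
  · simp_rw [weylVec_apply]
    rw [norm_sum_conj_mul_shift_of_ne hψ (fun _ => norm_omega_pow_pow _ _)
      (fun _ => norm_omega_pow_pow _ _) hj, h12, sq]

lemma trace_vecMulVec_star_mul_vecMulVec_star {n : Type*} [Fintype n] (v w : n → ℂ) :
    (vecMulVec v (star v) * vecMulVec w (star w)).trace =
      ((‖∑ i, conj (v i) * w i‖ ^ 2 : ℝ) : ℂ) := by
  rw [vecMulVec_mul_vecMulVec, trace_vecMulVec, dotProduct_smul, smul_eq_mul,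
    ← Complex.normSq_eq_norm_sq, ← Complex.mul_conj]
  simp only [dotProduct, Pi.star_apply, Complex.star_def, map_sum, map_mul, Complex.conj_conj]

lemma fiducial_zero (t : ℝ) : fiducial t 0 = 0 := by
  simp [fiducial]

lemma norm_sq_fiducial_one (t : ℝ) : ‖fiducial t 1‖ ^ 2 = 1 / 2 := by
  simp [fiducial]

lemma norm_sq_fiducial_two (t : ℝ) : ‖fiducial t 2‖ ^ 2 = 1 / 2 := by
  simp [fiducial]

lemma sum_norm_sq_fiducial (t : ℝ) : ∑ i, ‖fiducial t i‖ ^ 2 = 1 := by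
  rw [Fin.sum_univ_three, fiducial_zero, norm_sq_fiducial_one, norm_sq_fiducial_two]
  norm_num

/-- For every `t`, the nine unit vectors `X^j Z^k ψ(t)` have pairwise squared
overlaps `1/4`, and hence the projectors `Π_{jk}(t)` form a SIC in dimension 3:
`tr(Π_{jk}(t) Π_{j'k'}(t)) = (3·δ + 1)/4`. -/
theorem stmt_19 (t : ℝ) :
    (∀ j k : Fin 3, ∑ i, ‖sicVec t j k i‖ ^ 2 = 1) ∧
    (∀ j k j' k' : Fin 3, (j, k) ≠ (j', k') →
      ‖∑ i, (starRingEnd ℂ) (sicVec t j k i) * sicVec t j' k' i‖ ^ 2 = 1 / 4) ∧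
    (∀ j k j' k' : Fin 3,
      (sicProj t j k * sicProj t j' k').trace =
        (3 * (if (j, k) = (j', k') then 1 else 0) + 1) / 4) := by
  have h12 : ‖fiducial t 1‖ = ‖fiducial t 2‖ := by
    rw [← sq_eq_sq₀ (norm_nonneg _) (norm_nonneg _), norm_sq_fiducial_one, norm_sq_fiducial_two]
  have hnorm : ∀ j k : Fin 3, ∑ i, ‖sicVec t j k i‖ ^ 2 = 1 := fun j k =>
    (sum_norm_sq_weylVec (fiducial t) j k).trans (sum_norm_sq_fiducial t)
  have hoverlap : ∀ j k j' k' : Fin 3, (j, k) ≠ (j', k') →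
      ‖∑ i, (starRingEnd ℂ) (sicVec t j k i) * sicVec t j' k' i‖ ^ 2 = 1 / 4 := by
    intro j k j' k' h
    rw [show sicVec t = weylVec (fiducial t) from rfl,
      norm_inner_weylVec_of_ne (fiducial_zero t) h12 h, ← pow_mul, pow_mul',
      norm_sq_fiducial_one]
    norm_num
  refine ⟨hnorm, hoverlap, fun j k j' k' => ?_⟩
  rw [sicProj, sicProj, trace_vecMulVec_star_mul_vecMulVec_star]
  split_ifs with h
  · obtain ⟨rfl, rfl⟩ := Prod.ext_iff.1 h
    simp_rw [Complex.conj_mul', ← Complex.ofReal_pow, ← Complex.ofReal_sum, hnorm]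
    norm_num
  · rw [hoverlap j k j' k' h]
    norm_num
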